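/- Let ψ be a holomorphic function on a neighborhood U of 1 ∈ ℂ that is real-valued on U ∩ ℝ and satisfies ψ(z) = z + O(|z−1|³). Then there exist r₀ ∈ (0,1) and M > 0 such that for all r ∈ (r₀, 1): ψ'(r)/(1 − ψ(r)²) = (1/(1 − r²))·(1 + E(r)) with |E(r)| ≤ M·(1 − r)². -/

import Mathlib

open Set Metric Complex Filter

noncomputable section

/-- The Kobayashi metric of a domain `Ω` at the point `q` in the direction `ξ`. -/
def kobMetric {E : Type*} [NormedAddCommGroup E] [NormedSpace ℂ E]
    (Ω : Set E) (q ξ : E) : ℝ :=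
  sInf {lam : ℝ | 0 < lam ∧ ∃ f : ℂ → E, DifferentiableOn ℂ f (ball (0:ℂ) 1) ∧
    MapsTo f (ball (0:ℂ) 1) Ω ∧ f 0 = q ∧ lam • deriv f 0 = ξ}

/-- The Carathéodory metric of a domain `Ω` at the point `q` in the direction `ξ`. -/
def carMetric {E : Type*} [NormedAddCommGroup E] [NormedSpace ℂ E]
    (Ω : Set E) (q ξ : E) : ℝ :=
  sSup {r : ℝ | ∃ f : E → ℂ, DifferentiableOn ℂ f Ω ∧ MapsTo f Ω (ball (0:ℂ) 1) ∧
    f q = 0 ∧ r = ‖fderiv ℂ f q ξ‖}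

/-- The real Hessian quadratic form of `φ` at `p` in the direction `v`. -/
def realHessian {E : Type*} [NormedAddCommGroup E] [NormedSpace ℝ E]
    (φ : E → ℝ) (p v : E) : ℝ :=
  iteratedFDeriv ℝ 2 φ p ![v, v]

/-- The Levi form of `φ` at `p` in direction `w`, expressed via the real Hessian:
`Σ ∂²φ/∂z_i∂z̄_j w_i w̄_j = (H(w) + H(i·w))/4`. -/
def leviForm {E : Type*} [NormedAddCommGroup E] [NormedSpace ℂ E]
    (φ : E → ℝ) (p w : E) : ℝ :=
  (realHessian φ p w + realHessian φ p (Complex.I • w)) / 4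

/-- An open set `U ⊆ ℂⁿ` is holomorphically convex if for every compact `L ⊆ U`
its holomorphically convex hull in `U` is compact. -/
def IsHolConvex {n : ℕ} (U : Set (EuclideanSpace ℂ (Fin n))) : Prop :=
  ∀ L : Set (EuclideanSpace ℂ (Fin n)), L ⊆ U → IsCompact L →
    IsCompact {z ∈ U | ∀ f : EuclideanSpace ℂ (Fin n) → ℂ,
      DifferentiableOn ℂ f U → ‖f z‖ ≤ sSup ((fun w => ‖f w‖) '' L)}

/-- A compact set `X ⊆ ℂⁿ` is a Stein compact if every open set containing `X`
contains a holomorphically convex open neighbourhood of `X`. -/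
def IsSteinCompact {n : ℕ} (X : Set (EuclideanSpace ℂ (Fin n))) : Prop :=
  IsCompact X ∧ ∀ V : Set (EuclideanSpace ℂ (Fin n)), IsOpen V → X ⊆ V →
    ∃ U : Set (EuclideanSpace ℂ (Fin n)), IsOpen U ∧ X ⊆ U ∧ U ⊆ V ∧ IsHolConvex U

/-- `p` is a strictly pseudoconvex boundary point of `Ω` of class `C⁴`, witnessed by the
defining function `φ` on the neighbourhood `U` of `p`: the Levi form of `φ` at `p` is
positive on the nonzero complex tangent vectors (those `w` with `dφ_p(w) = dφ_p(i·w) = 0`,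
i.e. `Σ_j ∂φ/∂z_j(p) w_j = 0`). -/
def IsSPCBdryPtC4 {n : ℕ} (Ω : Set (EuclideanSpace ℂ (Fin n)))
    (p : EuclideanSpace ℂ (Fin n)) (U : Set (EuclideanSpace ℂ (Fin n)))
    (φ : EuclideanSpace ℂ (Fin n) → ℝ) : Prop :=
  IsOpen U ∧ p ∈ U ∧ ContDiffOn ℝ 4 φ U ∧
    Ω ∩ U = {z ∈ U | φ z < 0} ∧ frontier Ω ∩ U = {z ∈ U | φ z = 0} ∧
    fderiv ℝ φ p ≠ 0 ∧
    ∀ w : EuclideanSpace ℂ (Fin n), w ≠ 0 → fderiv ℝ φ p w = 0 →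
      fderiv ℝ φ p (Complex.I • w) = 0 → 0 < leviForm φ p w

/-- The pinched cone `C_{η,ν}(p)` for a domain with outward unit normal `e^{iθ}` at `p`. -/
def pinchedCone (p : ℂ) (θ η ν : ℝ) : Set ℂ :=
  {z : ℂ | |(Complex.exp (-(θ:ℂ) * Complex.I) * (z - p)).im| <
      η * ((Complex.exp (-(θ:ℂ) * Complex.I) * (z - p)).re)^2 ∧
    -ν < (Complex.exp (-(θ:ℂ) * Complex.I) * (z - p)).re ∧
    (Complex.exp (-(θ:ℂ) * Complex.I) * (z - p)).re < 0}

/-- A planar domain `D` is of class `C⁴` near `p ∈ ∂D` with curvature `κ`, where the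
outward unit normal at `p` is `e^{iθ}`: after the rigid motion `z ↦ e^{-iθ}(z - p)` there
is a `C⁴` local defining function of the form `2 Re z + κ|z|² + O(|z|³)`. -/
def IsC4CurvatureAt (D : Set ℂ) (p : ℂ) (θ κ : ℝ) : Prop :=
  ∃ U : Set ℂ, IsOpen U ∧ (0:ℂ) ∈ U ∧ ∃ φ : ℂ → ℝ, ContDiffOn ℝ 4 φ U ∧
    ((fun z => Complex.exp (-(θ:ℂ) * Complex.I) * (z - p)) '' D) ∩ U = {z ∈ U | φ z < 0} ∧
    frontier ((fun z => Complex.exp (-(θ:ℂ) * Complex.I) * (z - p)) '' D) ∩ U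
      = {z ∈ U | φ z = 0} ∧
    ∃ C > 0, ∀ z ∈ U, |φ z - 2 * z.re - κ * ‖z‖^2| ≤ C * ‖z‖^3

/-- A planar domain has `C²` smooth boundary. -/
def HasC2Boundary (D : Set ℂ) : Prop :=
  ∀ p ∈ frontier D, ∃ U : Set ℂ, IsOpen U ∧ p ∈ U ∧ ∃ φ : ℂ → ℝ, ContDiffOn ℝ 2 φ U ∧
    D ∩ U = {z ∈ U | φ z < 0} ∧ frontier D ∩ U = {z ∈ U | φ z = 0} ∧
    ∀ z ∈ U, fderiv ℝ φ z ≠ 0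

/-- A planar domain has `C⁴` smooth boundary. -/
def HasC4Boundary (D : Set ℂ) : Prop :=
  ∀ p ∈ frontier D, ∃ U : Set ℂ, IsOpen U ∧ p ∈ U ∧ ∃ φ : ℂ → ℝ, ContDiffOn ℝ 4 φ U ∧
    D ∩ U = {z ∈ U | φ z < 0} ∧ frontier D ∩ U = {z ∈ U | φ z = 0} ∧
    ∀ z ∈ U, fderiv ℝ φ z ≠ 0

/-- A planar domain has real-analytic boundary. -/
def HasAnalyticBoundary (D : Set ℂ) : Prop :=
  ∀ p ∈ frontier D, ∃ U : Set ℂ, IsOpen U ∧ p ∈ U ∧ ∃ φ : ℂ → ℝ, AnalyticOnNhd ℝ φ U ∧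
    D ∩ U = {z ∈ U | φ z < 0} ∧ frontier D ∩ U = {z ∈ U | φ z = 0} ∧
    ∀ z ∈ U, fderiv ℝ φ z ≠ 0

/-- `h` is harmonic on the planar set `D`. -/
def HarmonicOnSet (h : ℂ → ℝ) (D : Set ℂ) : Prop :=
  ContDiffOn ℝ 2 h D ∧ ∀ z ∈ D, realHessian h z 1 + realHessian h z Complex.I = 0

/-- The squeezing function of a planar domain. -/
def squeezingFn (D : Set ℂ) (z : ℂ) : ℝ :=
  sSup {r : ℝ | 0 < r ∧ ∃ f : ℂ → ℂ, DifferentiableOn ℂ f D ∧ InjOn f D ∧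
    MapsTo f D (ball (0:ℂ) 1) ∧ f z = 0 ∧ ball (0:ℂ) r ⊆ f '' D}

/-- The point `(a, v) ∈ ℂ × ℂⁿ = ℂⁿ⁺¹`. -/
def epCons {n : ℕ} (a : ℂ) (v : EuclideanSpace ℂ (Fin n)) : EuclideanSpace ℂ (Fin (n+1)) :=
  (WithLp.equiv 2 (Fin (n+1) → ℂ)).symm (Fin.cons a (WithLp.equiv 2 (Fin n → ℂ) v))

/-- The projection `z = (z₁, z') ↦ z'` from `ℂⁿ⁺¹` to `ℂⁿ`. -/
def epTail {n : ℕ} (z : EuclideanSpace ℂ (Fin (n+1))) : EuclideanSpace ℂ (Fin n) :=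
  (WithLp.equiv 2 (Fin n → ℂ)).symm (fun i => z i.succ)

end

/-!
Put `g = ψ - id`. Cauchy's estimate on the disc of radius `|w - 1| / 2` about `w` turns
`|g z| ≤ C |z - 1|³` into `|g' w| = O(|w - 1|²)`. Then
`ψ'(z)(1 - z²) - (1 - ψ(z)²) = (ψ'(z) - 1)(1 - z²) + g(z)(ψ(z) + z) = O(|z - 1|³)`, while
`(1 - ψ(z)²) / (z - 1) → -2`, so `E = ψ'(z)(1 - z²) / (1 - ψ(z)²) - 1 = O(|z - 1|²)` as `z → 1`,
in particular along `r → 1⁻`.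
-/

open Asymptotics Topology

theorem isBigO_div_sub_of_isBigO_pow_succ {𝕜 : Type*} [NormedField 𝕜] {f : 𝕜 → 𝕜} {a : 𝕜}
    {k : ℕ} (h : f =O[𝓝[≠] a] fun z => ‖z - a‖ ^ (k + 1)) :
    (fun z => f z / (z - a)) =O[𝓝[≠] a] fun z => ‖z - a‖ ^ k := by
  refine (h.mul (isBigO_refl (fun z => (z - a)⁻¹) _).norm_right).congr'
    (Eventually.of_forall fun z => (div_eq_mul_inv _ _).symm) ?_
  filter_upwards [self_mem_nhdsWithin] with z hz
  have hz : ‖z - a‖ ≠ 0 := norm_ne_zero_iff.2 (sub_ne_zero.2 hz)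
  rw [norm_inv, pow_succ, mul_inv_cancel_right₀ hz]

theorem isBigO_deriv_of_isBigO_pow_succ {F : Type*} [NormedAddCommGroup F] [NormedSpace ℂ F]
    {g : ℂ → F} {z₀ : ℂ} {k : ℕ} (hd : ∀ᶠ z in 𝓝 z₀, DifferentiableAt ℂ g z)
    (hg : g =O[𝓝 z₀] fun z => ‖z - z₀‖ ^ (k + 1)) :
    deriv g =O[𝓝[≠] z₀] fun z => ‖z - z₀‖ ^ k := by
  obtain ⟨c, hc, hcg⟩ := hg.exists_pos
  obtain ⟨ε, hε, hball⟩ := Metric.eventually_nhds_iff.1 (hd.and hcg.bound)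
  refine IsBigO.of_bound (c * 3 ^ (k + 1)) ?_
  filter_upwards [self_mem_nhdsWithin, nhdsWithin_le_nhds (ball_mem_nhds z₀ (half_pos hε))]
    with w hw hwε
  have hw0 : 0 < ‖w - z₀‖ := norm_pos_iff.2 (sub_ne_zero.2 hw)
  have hwε : ‖w - z₀‖ < ε / 2 := by simpa [dist_eq_norm] using hwε
  set ρ := ‖w - z₀‖ / 2 with hρ
  have hρ0 : 0 < ρ := by positivity
  have hnear : ∀ z ∈ closedBall w ρ, ‖z - z₀‖ ≤ 3 * ρ := fun z hz => by
    have := norm_sub_le_norm_sub_add_norm_sub z w z₀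
    rw [mem_closedBall, dist_eq_norm] at hz
    linarith
  have hmem : ∀ z ∈ closedBall w ρ, dist z z₀ < ε := fun z hz => by
    rw [dist_eq_norm]; linarith [hnear z hz]
  have hdc : DiffContOnCl ℂ g (ball w ρ) := by
    refine DifferentiableOn.diffContOnCl ?_
    rw [closure_ball w hρ0.ne']
    exact fun z hz => ((hball (hmem z hz)).1).differentiableWithinAt
  have hsphere : ∀ z ∈ sphere w ρ, ‖g z‖ ≤ c * (3 * ρ) ^ (k + 1) := fun z hz => by
    have hz := sphere_subset_closedBall hz
    calc ‖g z‖ ≤ c * ‖‖z - z₀‖ ^ (k + 1)‖ := (hball (hmem z hz)).2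
      _ ≤ c * (3 * ρ) ^ (k + 1) := by
        rw [norm_pow, norm_norm]; gcongr; exact hnear z hz
  calc ‖deriv g w‖ ≤ c * (3 * ρ) ^ (k + 1) / ρ :=
        norm_deriv_le_of_forall_mem_sphere_norm_le hρ0 hdc hsphere
    _ = c * 3 ^ (k + 1) * ρ ^ k := by rw [mul_pow, pow_succ ρ]; field_simp
    _ ≤ c * 3 ^ (k + 1) * ‖‖w - z₀‖ ^ k‖ := by
        rw [norm_pow, norm_norm]; gcongr; linarith

theorem isBigO_mul_one_sub_sq_div_one_sub_sq_sub_one {p q : ℂ → ℂ}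
    (hp : (fun z => p z - z) =O[𝓝[≠] 1] fun z => ‖z - 1‖ ^ 3)
    (hq : (fun z => q z - 1) =O[𝓝[≠] 1] fun z => ‖z - 1‖ ^ 2) :
    (fun z => q z * (1 - z ^ 2) / (1 - p z ^ 2) - 1) =O[𝓝[≠] 1] fun z => ‖z - 1‖ ^ 2 := by
  have hid : Tendsto (fun z : ℂ => z) (𝓝[≠] 1) (𝓝 1) :=
    tendsto_id.mono_left nhdsWithin_le_nhds
  have hdist : ∀ n ≠ 0, Tendsto (fun z : ℂ => ‖z - 1‖ ^ n) (𝓝[≠] 1) (𝓝 0) := fun n hn => by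
    simpa [zero_pow hn] using (hid.sub_const 1).norm.pow n
  have hsum : Tendsto (fun z => p z + z) (𝓝[≠] 1) (𝓝 2) := by
    have := (hp.trans_tendsto (hdist 3 three_ne_zero)).add (hid.const_mul 2)
    simp only [mul_one, zero_add] at this
    exact this.congr fun z => by ring
  have hprod : (fun z => (p z - z) * (p z + z) / (z - 1)) =O[𝓝[≠] 1]
      fun z => ‖z - 1‖ ^ 2 :=
    isBigO_div_sub_of_isBigO_pow_succ (by simpa using hp.mul (hsum.isBigO_one ℝ))
  have hden : Tendsto (fun z => (1 - p z ^ 2) / (z - 1)) (𝓝[≠] 1) (𝓝 (-2)) := by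
    have := (hid.add_const 1).neg.sub (hprod.trans_tendsto (hdist 2 two_ne_zero))
    rw [show -((1 : ℂ) + 1) - 0 = -2 by norm_num] at this
    refine this.congr' ?_
    filter_upwards [self_mem_nhdsWithin] with z hz1
    have : z - 1 ≠ 0 := sub_ne_zero.2 hz1
    field_simp
    ring
  have hnum : (fun z => (q z * (1 - z ^ 2) - (1 - p z ^ 2)) / (z - 1)) =O[𝓝[≠] 1]
      fun z => ‖z - 1‖ ^ 2 := by
    have hlin := (hq.mul ((hid.add_const 1).isBigO_one ℝ)).neg_left
    simp only [mul_one] at hlin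
    refine (hlin.add hprod).congr' ?_ EventuallyEq.rfl
    filter_upwards [self_mem_nhdsWithin] with z hz1
    have : z - 1 ≠ 0 := sub_ne_zero.2 hz1
    field_simp
    ring
  refine (hnum.mul ((hden.inv₀ (by norm_num)).isBigO_one ℝ)).congr' ?_
    (Eventually.of_forall fun z => mul_one _)
  filter_upwards [self_mem_nhdsWithin, hden.eventually_ne (by norm_num : (-2 : ℂ) ≠ 0)]
    with z hz1 hD
  have : z - 1 ≠ 0 := sub_ne_zero.2 hz1
  have hD : 1 - p z ^ 2 ≠ 0 := (div_ne_zero_iff.1 hD).1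
  field_simp

theorem tendsto_ofReal_nhdsLT_nhdsNE (x : ℝ) :
    Tendsto ((↑) : ℝ → ℂ) (𝓝[<] x) (𝓝[≠] (x : ℂ)) :=
  tendsto_nhdsWithin_of_tendsto_nhds_of_eventually_within _
    (continuous_ofReal.continuousAt.mono_left nhdsWithin_le_nhds)
    (eventually_nhdsWithin_of_forall fun _ hr => by simpa using hr.ne)

theorem riemann_map_metric_expansion_general (U : Set ℂ) (hU : IsOpen U) (h1 : (1:ℂ) ∈ U)
    (ψ : ℂ → ℂ) (hψ : DifferentiableOn ℂ ψ U)
    (C₀ : ℝ) (hexp : ∀ z ∈ U, ‖ψ z - z‖ ≤ C₀ * ‖z - 1‖^3) :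
    ∃ r₀ : ℝ, 0 < r₀ ∧ r₀ < 1 ∧ ∃ M > (0:ℝ), ∀ r : ℝ, r₀ < r → r < 1 →
      ∃ E : ℂ, deriv ψ r / (1 - ψ r ^ 2) = (1 / (1 - (r:ℂ)^2)) * (1 + E) ∧
        ‖E‖ ≤ M * (1 - r)^2 := by
  have hdiff : ∀ᶠ z in 𝓝 1, DifferentiableAt ℂ ψ z :=
    eventually_of_mem (hU.mem_nhds h1) fun z hz => hψ.differentiableAt (hU.mem_nhds hz)
  have hgap : (fun z => ψ z - z) =O[𝓝 1] fun z => ‖z - 1‖ ^ 3 :=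
    IsBigO.of_bound C₀ (eventually_of_mem (hU.mem_nhds h1) fun z hz => by simpa using hexp z hz)
  have hderiv : (fun z => deriv ψ z - 1) =O[𝓝[≠] 1] fun z => ‖z - 1‖ ^ 2 := by
    refine (isBigO_deriv_of_isBigO_pow_succ (g := fun z => ψ z - z)
      (hdiff.mono fun z hz => hz.sub differentiableAt_fun_id) hgap).congr' ?_ EventuallyEq.rfl
    filter_upwards [nhdsWithin_le_nhds hdiff] with z hz
    rw [deriv_fun_sub hz differentiableAt_fun_id, deriv_id'']
  obtain ⟨M, hM, hE⟩ := ((isBigO_mul_one_sub_sq_div_one_sub_sq_sub_one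
    (hgap.mono nhdsWithin_le_nhds) hderiv).comp_tendsto
    (tendsto_ofReal_nhdsLT_nhdsNE 1)).exists_pos
  obtain ⟨r₀, hr₀, hr₀E⟩ := mem_nhdsLT_iff_exists_Ioo_subset.1 hE.bound
  refine ⟨max r₀ (1 / 2), by positivity, max_lt hr₀ (by norm_num), M, hM,
    fun r hr hr1 => ?_⟩
  have hrI : r ∈ Ioo r₀ 1 := ⟨(le_max_left _ _).trans_lt hr, hr1⟩
  have hr2 : (1 : ℂ) - r ^ 2 ≠ 0 := by
    rw [← ofReal_one, ← ofReal_pow, ← ofReal_sub, ofReal_ne_zero]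
    nlinarith [(le_max_right r₀ (1 / 2)).trans_lt hr]
  refine ⟨_, ?_, (hr₀E hrI).trans_eq ?_⟩
  · simp only [Function.comp_apply, add_sub_cancel]
    rw [mul_div_right_comm, one_div_mul_eq_div, mul_div_cancel_right₀ _ hr2]
  · rw [Function.comp_apply, norm_pow, norm_norm, ← ofReal_one, ← ofReal_sub, norm_real,
      Real.norm_eq_abs, sq_abs, sub_sq_comm]

/-- If `ψ` is holomorphic near `1 ∈ ℂ`, real on the reals, and
`ψ(z) = z + O(|z-1|³)`, then for real `r` close to `1`,
`ψ'(r)/(1 - ψ(r)²) = (1/(1 - r²))·(1 + E(r))` with `|E(r)| ≤ M(1 - r)²`. -/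
theorem riemann_map_metric_expansion (U : Set ℂ) (hU : IsOpen U) (h1 : (1:ℂ) ∈ U)
    (ψ : ℂ → ℂ) (hψ : DifferentiableOn ℂ ψ U)
    (hreal : ∀ x : ℝ, (x:ℂ) ∈ U → (ψ x).im = 0)
    (C₀ : ℝ) (hexp : ∀ z ∈ U, ‖ψ z - z‖ ≤ C₀ * ‖z - 1‖^3) :
    ∃ r₀ : ℝ, 0 < r₀ ∧ r₀ < 1 ∧ ∃ M > (0:ℝ), ∀ r : ℝ, r₀ < r → r < 1 →
      ∃ E : ℂ, deriv ψ r / (1 - ψ r ^ 2) = (1 / (1 - (r:ℂ)^2)) * (1 + E) ∧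
        ‖E‖ ≤ M * (1 - r)^2 :=
  riemann_map_metric_expansion_general U hU h1 ψ hψ C₀ hexp
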